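/- The direct-product tensor of closed relations is functorial: (i) id_{K1} ⊗ id_{K2} = id_{K1 ⊗ K2}, where id_K(g) := cl({g}) and (R1 ⊗ R2)(g1,g2) := cl(R1(g1) × R2(g2)); and (ii) for closed relations R1 : K1 → K3, R2 : K2 → K4, R3 : K3 → K5, R4 : K4 → K6 one has (R3 ⊗ R4) ∘ (R1 ⊗ R2) = (R3 ∘ R1) ⊗ (R4 ∘ R2), where composition of closed relations is (S ∘ R)(g) := cl(S(R(g))). -/

import Mathlib

open Set

/-- A formal context `(G, M, I)`: a set of objects, a set of attributes,
and an incidence relation between them. -/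
structure FormalContext where
  G : Type*
  M : Type*
  I : G → M → Prop

namespace FormalContext

variable (K : FormalContext)

/-- `A'` for a set of objects `A ⊆ G`. -/
def polarG (A : Set K.G) : Set K.M := upperPolar K.I A

/-- `B'` for a set of attributes `B ⊆ M`. -/
def polarM (B : Set K.M) : Set K.G := lowerPolar K.I B

/-- The closure `cl(A) = A''` of a set of objects. -/
def clG (A : Set K.G) : Set K.G := K.polarM (K.polarG A)

/-- The closure `cl(B) = B''` of a set of attributes. -/
def clM (B : Set K.M) : Set K.M := K.polarG (K.polarM B)

/-- A set of objects is closed when it equals its closure. -/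
def ClosedG (A : Set K.G) : Prop := K.clG A = A

/-- A set of attributes is closed when it equals its closure. -/
def ClosedM (B : Set K.M) : Prop := K.clM B = B

/-- The dual context `K* = (M, G, I†)`. -/
def dual : FormalContext := ⟨K.M, K.G, fun m g => K.I g m⟩

/-- The direct product `K1 ⊗ K2` of formal contexts (Ganter–Wille). -/
def dprod (K1 K2 : FormalContext) : FormalContext :=
  ⟨K1.G × K2.G, K1.M × K2.M, fun g m => K1.I g.1 m.1 ∨ K2.I g.2 m.2⟩

end FormalContext

/-- The trivial context `I = ({⋆},{⋆},≠)`. -/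
def trivCxt : FormalContext := ⟨PUnit, PUnit, fun a b => a ≠ b⟩

/-- The image `R(S)` of a set under a relation. -/
def relImage {X Y : Type*} (R : X → Y → Prop) (S : Set X) : Set Y :=
  {y | ∃ x ∈ S, R x y}

/-- `R^•(T) = {x | R(x) ⊆ T}`. -/
def relDot {X Y : Type*} (R : X → Y → Prop) (T : Set Y) : Set X :=
  {x | ∀ y, R x y → y ∈ T}

/-- `R_•(S) = {y | ∀ x ∈ S, R(x,y)}`. -/
def relLower {X Y : Type*} (R : X → Y → Prop) (S : Set X) : Set Y :=
  {y | ∀ x ∈ S, R x y}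

/-- A closed relation `K1 → K2`: each row `R(g)` is closed in `K2` and
`R^•` preserves closed sets. -/
structure IsClosedRel (K1 K2 : FormalContext) (R : K1.G → K2.G → Prop) : Prop where
  row_closed : ∀ g : K1.G, K2.ClosedG (relImage R {g})
  dot_closed : ∀ Y : Set K2.G, K2.ClosedG Y → K1.ClosedG (relDot R Y)

/-- Composition of closed relations: `(S ∘ R)(g) := cl(S(R(g)))`, closure in `K`. -/
def relComp {X Y : Type*} (K : FormalContext) (S : Y → K.G → Prop) (R : X → Y → Prop) :
    X → K.G → Prop :=
  fun g h => h ∈ K.clG (relImage S (relImage R {g}))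

/-- Composition on the attribute side: `(S ∘ R)(m) := cl(S(R(m)))`, closure on the
attribute side of `K`. -/
def relCompM {X Y : Type*} (K : FormalContext) (S : Y → K.M → Prop) (R : X → Y → Prop) :
    X → K.M → Prop :=
  fun m n => n ∈ K.clM (relImage S (relImage R {m}))

/-- The identity closed relation on `K`: `g ↦ cl({g})`. -/
def idClosedRel (K : FormalContext) : K.G → K.G → Prop := fun g h => h ∈ K.clG {g}

/-- A Chu correspondence `(R,S) : K1 → K2`. -/
structure IsChu (K1 K2 : FormalContext) (R : K1.G → K2.G → Prop) (S : K2.M → K1.M → Prop) :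
    Prop where
  extent_closed : ∀ g : K1.G, K2.ClosedG (relImage R {g})
  intent_closed : ∀ m : K2.M, K1.ClosedM (relImage S {m})
  adj : ∀ (g : K1.G) (m : K2.M),
    (∀ h ∈ relImage R {g}, K2.I h m) ↔ (∀ n ∈ relImage S {m}, K1.I g n)

/-- The intent relation `R*(m) := (R^•(m'))'` of a (closed) relation `R`. -/
def starRel (K1 K2 : FormalContext) (R : K1.G → K2.G → Prop) : K2.M → K1.M → Prop :=
  fun m n => n ∈ K1.polarG (relDot R (K2.polarM {m}))

/-- A bond from `K1` to `K2`: a relation `B ⊆ G1 × M2` with closed rows and columns. -/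
structure IsBond (K1 K2 : FormalContext) (B : K1.G → K2.M → Prop) : Prop where
  row_closed : ∀ g : K1.G, K2.ClosedM (relImage B {g})
  col_closed : ∀ m : K2.M, K1.ClosedG {g | B g m}

/-- The tensor `(R1 ⊗ R2)(g1,g2) := cl(R1(g1) × R2(g2))` of relations, closure in `K3 ⊗ K4`. -/
def tensorRelMor (K3 K4 : FormalContext) {X Y : Type*}
    (R1 : X → K3.G → Prop) (R2 : Y → K4.G → Prop) :
    X × Y → (K3.dprod K4).G → Prop :=
  fun p q => q ∈ (K3.dprod K4).clG (relImage R1 {p.1} ×ˢ relImage R2 {p.2})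

/-- The concept of `K` generated by a set of objects `A`: `(cl(A), A')`. -/
def conceptOfSet (K : FormalContext) (A : Set K.G) : Concept K.G K.M K.I where
  extent := K.clG A
  intent := K.polarG A
  upperPolar_extent := upperPolar_lowerPolar_upperPolar (r := K.I) A
  lowerPolar_intent := rfl

/-- The sup-lattice map `ℬ(R)` on concept lattices induced by a relation:
`(A,A') ↦ (cl(R(A)), R(A)')`. -/
def conceptMap (K1 K2 : FormalContext) (R : K1.G → K2.G → Prop) :
    Concept K1.G K1.M K1.I → Concept K2.G K2.M K2.I :=
  fun c => conceptOfSet K2 (relImage R c.extent)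

/-- The incidence relation of the context whose concept lattice is the concept tensor
`V1 ⊗ V2`: `(x,y) ∇ (w,z) iff x ≤ w or y ≤ z`. -/
def tensorRel (V1 V2 : Type*) [CompleteLattice V1] [CompleteLattice V2] :
    V1 × V2 → V1 × V2 → Prop :=
  fun p q => p.1 ≤ q.1 ∨ p.2 ≤ q.2

/-- The concept tensor `V1 ⊗ V2` of complete lattices (Wille's tensor product). -/
abbrev ConceptTensor (V1 V2 : Type*) [CompleteLattice V1] [CompleteLattice V2] :=
  Concept (V1 × V2) (V1 × V2) (tensorRel V1 V2)

/-- The tensorial operation `x ⊼ y`: the concept with extent `cl{(x,y)}` and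
intent `{(x,y)}'`. -/
def wedge {V1 V2 : Type*} [CompleteLattice V1] [CompleteLattice V2] (x : V1) (y : V2) :
    ConceptTensor V1 V2 where
  extent := lowerPolar (tensorRel V1 V2) (upperPolar (tensorRel V1 V2) {(x, y)})
  intent := upperPolar (tensorRel V1 V2) {(x, y)}
  upperPolar_extent := upperPolar_lowerPolar_upperPolar _ _
  lowerPolar_intent := rfl

/-- Two subsets of a complete lattice are mutually distributive: all families indexed
by a set `ι` satisfy the two distributivity laws. -/
def MutuallyDistrib {M : Type u} [CompleteLattice M] (X Y : Set M) : Prop :=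
  ∀ (ι : Type u) (x y : ι → M), (∀ i, x i ∈ X) → (∀ i, y i ∈ Y) →
    ((⨆ i, x i ⊓ y i) = ⨅ J : Set ι, ((⨆ j ∈ J, x j) ⊔ ⨆ k ∈ Jᶜ, y k)) ∧
    ((⨅ i, x i ⊔ y i) = ⨆ J : Set ι, ((⨅ j ∈ J, x j) ⊓ ⨅ k ∈ Jᶜ, y k))
section Aux

open FormalContext

variable {K : FormalContext}

lemma clG_mono {A B : Set K.G} (h : A ⊆ B) : K.clG A ⊆ K.clG B :=
  lowerPolar_anti (r := K.I) (upperPolar_anti (r := K.I) h)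

lemma subset_clG (A : Set K.G) : A ⊆ K.clG A :=
  subset_lowerPolar_upperPolar (r := K.I) _

lemma closedG_polarM (B : Set K.M) : K.ClosedG (K.polarM B) := by
  apply subset_antisymm
  · exact lowerPolar_anti (r := K.I) (subset_upperPolar_lowerPolar (r := K.I) _)
  · exact subset_clG _

lemma closedG_clG (A : Set K.G) : K.ClosedG (K.clG A) := closedG_polarM _

lemma clG_clG (A : Set K.G) : K.clG (K.clG A) = K.clG A := closedG_clG A

lemma closedG_biInter {ι : Type*} {S : Set ι} {f : ι → Set K.G}
    (h : ∀ i ∈ S, K.ClosedG (f i)) : K.ClosedG (⋂ i ∈ S, f i) := by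
  apply subset_antisymm
  · intro g hg
    rw [Set.mem_iInter₂]
    intro i hi
    exact (h i hi) ▸ clG_mono (Set.biInter_subset_of_mem hi) hg
  · exact subset_clG _

lemma or_forall_core {α β : Type*} (A : Set α) (B : Set β) (P : α → Prop) (Q : β → Prop) :
    (∀ a ∈ A, ∀ b ∈ B, P a ∨ Q b) ↔ (∀ a ∈ A, P a) ∨ (∀ b ∈ B, Q b) := by
  constructor
  · intro h
    by_cases hp : ∀ a ∈ A, P a
    · exact Or.inl hp
    · push_neg at hp
      obtain ⟨a, ha, hpa⟩ := hp
      exact Or.inr fun b hb => (h a ha b hb).resolve_left hpa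
  · rintro (h | h) a ha b hb
    · exact Or.inl (h a ha)
    · exact Or.inr (h b hb)

lemma relImage_singleton {X Y : Type*} (R : X → Y → Prop) (g : X) :
    relImage R {g} = {y | R g y} := by
  ext y; simp [relImage]

lemma clG_prod_subset (K1 K2 : FormalContext) (A : Set K1.G) (B : Set K2.G) :
    (K1.clG A) ×ˢ (K2.clG B) ⊆ (K1.dprod K2).clG (A ×ˢ B) := by
  rintro ⟨g1, g2⟩ ⟨hg1, hg2⟩ ⟨m1, m2⟩ hm
  have hm' : (∀ a ∈ A, K1.I a m1) ∨ (∀ b ∈ B, K2.I b m2) :=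
    (or_forall_core A B _ _).1 fun a ha b hb => hm (Set.mk_mem_prod ha hb)
  rcases hm' with h | h
  · exact Or.inl (hg1 h)
  · exact Or.inr (hg2 h)

lemma clG_prod_clG (K1 K2 : FormalContext) (A : Set K1.G) (B : Set K2.G) :
    (K1.dprod K2).clG ((K1.clG A) ×ˢ (K2.clG B)) = (K1.dprod K2).clG (A ×ˢ B) := by
  apply subset_antisymm
  · have := clG_mono (K := K1.dprod K2) (clG_prod_subset K1 K2 A B)
    exact this.trans (clG_clG (K := K1.dprod K2) (A ×ˢ B)).subset
  · exact clG_mono (Set.prod_mono (subset_clG A) (subset_clG B))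

lemma closed_or_prod (K1 K2 : FormalContext) {P : Set K1.G} {Q : Set K2.G}
    (hP : K1.ClosedG P) (hQ : K2.ClosedG Q) :
    (K1.dprod K2).ClosedG {g | g.1 ∈ P ∨ g.2 ∈ Q} := by
  have key : {g : (K1.dprod K2).G | g.1 ∈ P ∨ g.2 ∈ Q} =
      (K1.dprod K2).polarM ((K1.polarG P) ×ˢ (K2.polarG Q)) := by
    ext ⟨g1, g2⟩
    constructor
    · rintro (h | h) ⟨m1, m2⟩ ⟨hm1, hm2⟩
      · exact Or.inl (hm1 h)
      · exact Or.inr (hm2 h)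
    · intro h
      have h' : (∀ a ∈ K1.polarG P, K1.I g1 a) ∨ (∀ b ∈ K2.polarG Q, K2.I g2 b) :=
        (or_forall_core _ _ _ _).1 fun a ha b hb => h (Set.mk_mem_prod ha hb)
      rcases h' with h' | h'
      · exact Or.inl (hP ▸ (h' : g1 ∈ K1.polarM (K1.polarG P)))
      · exact Or.inr (hQ ▸ (h' : g2 ∈ K2.polarM (K2.polarG Q)))
  rw [key]
  exact closedG_polarM _

lemma tensor_rows_into_closed (K3 K4 K5 K6 : FormalContext)
    (R3 : K3.G → K5.G → Prop) (R4 : K4.G → K6.G → Prop)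
    (hR3 : IsClosedRel K3 K5 R3) (hR4 : IsClosedRel K4 K6 R4)
    (C : Set (K5.dprod K6).G) (hC : (K5.dprod K6).ClosedG C) :
    (K3.dprod K4).ClosedG {q | ∀ h1, R3 q.1 h1 → ∀ h2, R4 q.2 h2 → (h1, h2) ∈ C} := by
  have hCeq : C = (K5.dprod K6).polarM ((K5.dprod K6).polarG C) := hC.symm
  have key : {q : (K3.dprod K4).G | ∀ h1, R3 q.1 h1 → ∀ h2, R4 q.2 h2 → (h1, h2) ∈ C} =
      ⋂ m ∈ (K5.dprod K6).polarG C,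
        {q : (K3.dprod K4).G | q.1 ∈ relDot R3 (K5.polarM {m.1}) ∨
          q.2 ∈ relDot R4 (K6.polarM {m.2})} := by
    ext ⟨q1, q2⟩
    refine Iff.trans ?_ Set.mem_iInter₂.symm
    show (∀ h1, R3 q1 h1 → ∀ h2, R4 q2 h2 → (h1, h2) ∈ C) ↔
      ∀ m : (K5.dprod K6).M, m ∈ (K5.dprod K6).polarG C →
        (q1 ∈ relDot R3 (K5.polarM {m.1}) ∨ q2 ∈ relDot R4 (K6.polarM {m.2}))
    constructor
    · intro h m hm
      have h' : (∀ h1 ∈ {h1 | R3 q1 h1}, K5.I h1 m.1) ∨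
          (∀ h2 ∈ {h2 | R4 q2 h2}, K6.I h2 m.2) := by
        apply (or_forall_core _ _ _ _).1
        intro h1 h1m h2 h2m
        exact hCeq ▸ (h h1 h1m h2 h2m) <| hm
      rcases h' with h' | h'
      · refine Or.inl fun y hy => ?_
        intro n hn
        rw [Set.mem_singleton_iff] at hn
        exact hn ▸ h' y hy
      · refine Or.inr fun y hy => ?_
        intro n hn
        rw [Set.mem_singleton_iff] at hn
        exact hn ▸ h' y hy
    · intro h h1 h1m h2 h2m
      rw [hCeq]
      rintro ⟨m1, m2⟩ hm
      rcases h (m1, m2) hm with h' | h'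
      · exact Or.inl (h' h1 h1m (Set.mem_singleton m1))
      · exact Or.inr (h' h2 h2m (Set.mem_singleton m2))
  rw [key]
  apply closedG_biInter
  intro m _
  exact closed_or_prod K3 K4 (hR3.dot_closed _ (closedG_polarM _)) (hR4.dot_closed _ (closedG_polarM _))

end Aux

/-- The direct-product tensor of closed relations is functorial:
`id ⊗ id = id` and `(R3 ⊗ R4) ∘ (R1 ⊗ R2) = (R3 ∘ R1) ⊗ (R4 ∘ R2)`. -/
theorem tensorRelMor_functorial (K1 K2 K3 K4 K5 K6 : FormalContext) :
    (tensorRelMor K1 K2 (idClosedRel K1) (idClosedRel K2) = idClosedRel (K1.dprod K2)) ∧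
    (∀ (R1 : K1.G → K3.G → Prop) (R2 : K2.G → K4.G → Prop)
       (R3 : K3.G → K5.G → Prop) (R4 : K4.G → K6.G → Prop),
      IsClosedRel K1 K3 R1 → IsClosedRel K2 K4 R2 →
      IsClosedRel K3 K5 R3 → IsClosedRel K4 K6 R4 →
      relComp (K5.dprod K6) (tensorRelMor K5 K6 R3 R4) (tensorRelMor K3 K4 R1 R2) =
        tensorRelMor K5 K6 (relComp K5 R3 R1) (relComp K6 R4 R2)) := by
  constructor
  · funext p q
    rw [eq_iff_iff]
    show q ∈ (K1.dprod K2).clG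
        (relImage (idClosedRel K1) {p.1} ×ˢ relImage (idClosedRel K2) {p.2})
      ↔ q ∈ (K1.dprod K2).clG {p}
    rw [relImage_singleton, relImage_singleton]
    unfold idClosedRel
    rw [Set.setOf_mem_eq, Set.setOf_mem_eq, clG_prod_clG, Set.singleton_prod_singleton]
    exact Iff.rfl
  · intro R1 R2 R3 R4 hR1 hR2 hR3 hR4
    funext p r
    rw [eq_iff_iff]
    set A1 := relImage R1 {p.1} with hA1
    set A2 := relImage R2 {p.2} with hA2
    set E3 := relImage R3 A1 with hE3
    set E4 := relImage R4 A2 with hE4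
    set C := (K5.dprod K6).clG (E3 ×ˢ E4) with hCdef
    have hCclosed : (K5.dprod K6).ClosedG C := closedG_clG _
    have hRHS : tensorRelMor K5 K6 (relComp K5 R3 R1) (relComp K6 R4 R2) p r ↔ r ∈ C := by
      show r ∈ (K5.dprod K6).clG
          (relImage (relComp K5 R3 R1) {p.1} ×ˢ relImage (relComp K6 R4 R2) {p.2}) ↔ r ∈ C
      rw [relImage_singleton, relImage_singleton]
      unfold relComp
      rw [Set.setOf_mem_eq, Set.setOf_mem_eq, clG_prod_clG]
    have hS : relImage (tensorRelMor K3 K4 R1 R2) {p} = (K3.dprod K4).clG (A1 ×ˢ A2) := by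
      rw [relImage_singleton]
      unfold tensorRelMor
      rw [Set.setOf_mem_eq]
    set S := (K3.dprod K4).clG (A1 ×ˢ A2) with hSdef
    set D := {q' : (K3.dprod K4).G | ∀ h1, R3 q'.1 h1 → ∀ h2, R4 q'.2 h2 → (h1, h2) ∈ C}
      with hDdef
    have hDclosed : (K3.dprod K4).ClosedG D :=
      tensor_rows_into_closed K3 K4 K5 K6 R3 R4 hR3 hR4 C hCclosed
    have hsub : A1 ×ˢ A2 ⊆ D := by
      rintro ⟨q1, q2⟩ ⟨hq1, hq2⟩ h1 h31 h2 h42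
      have m1 : h1 ∈ E3 := ⟨q1, hq1, h31⟩
      have m2 : h2 ∈ E4 := ⟨q2, hq2, h42⟩
      rw [hCdef]
      exact subset_clG (K := K5.dprod K6) (E3 ×ˢ E4) (Set.mk_mem_prod m1 m2)
    have hSsub : S ⊆ D := by
      have h := clG_mono (K := K3.dprod K4) hsub
      rw [hDclosed] at h
      exact h
    have hLHS_set : relImage (tensorRelMor K5 K6 R3 R4) S ⊆ C := by
      rintro r' ⟨q, hqS, hq⟩
      have hqD := hSsub hqS
      have hrow : relImage R3 {q.1} ×ˢ relImage R4 {q.2} ⊆ C := by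
        rintro ⟨h1, h2⟩ ⟨hh1, hh2⟩
        rw [relImage_singleton] at hh1 hh2
        exact hqD h1 hh1 h2 hh2
      have h := clG_mono (K := K5.dprod K6) hrow hq
      rwa [hCclosed] at h
    have key : (K5.dprod K6).clG (relImage (tensorRelMor K5 K6 R3 R4) S) = C := by
      apply subset_antisymm
      · have h := clG_mono (K := K5.dprod K6) hLHS_set
        rwa [hCclosed] at h
      · rw [hCdef]
        apply clG_mono
        rintro ⟨h1, h2⟩ ⟨⟨q1, hq1, h31⟩, ⟨q2, hq2, h42⟩⟩
        refine ⟨(q1, q2), subset_clG _ (Set.mk_mem_prod hq1 hq2), ?_⟩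
        have m1 : h1 ∈ relImage R3 {q1} := ⟨q1, rfl, h31⟩
        have m2 : h2 ∈ relImage R4 {q2} := ⟨q2, rfl, h42⟩
        exact subset_clG _ (Set.mk_mem_prod m1 m2)
    rw [hRHS]
    show r ∈ (K5.dprod K6).clG
        (relImage (tensorRelMor K5 K6 R3 R4) (relImage (tensorRelMor K3 K4 R1 R2) {p}))
      ↔ r ∈ C
    rw [← key, ← hS]
    exact Iff.rfl
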